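/- arXiv:1608.01216 — 2 statements merged into one kernel-verified Lean document; each statement's English description precedes it below -/
import Mathlib

section
/- Let d, d̄ ∈ S be linearly independent, set u = (d × d̄)/|d × d̄|, and let P : [−1,1] → ℝ be continuously differentiable. Define Q(x) = P(x·u)(x·d̄) and Q̄(x) = P(x·u)(x·d) for x ∈ S. Then V[Q,d](x₀) = V[Q̄,d̄](x₀) for every x₀ ∈ ℝ³ with |x₀| ≠ 1. In particular, two distinct dipole directions d ≠ ±d̄ can generate the same magnetic potential outside the sphere. -/
open MeasureTheory
open scoped RealInnerProductSpace

noncomputable section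

abbrev E3 := EuclideanSpace ℝ (Fin 3)

/-- The unit sphere `S = {x ∈ ℝ³ : |x| = 1}`. -/
def sphS : Set E3 := Metric.sphere 0 1

/-- The magnetic potential generated by a magnetization `m` on the unit sphere. -/
def V (m : E3 → E3) (x : E3) : ℝ :=
  (4 * Real.pi)⁻¹ * ∫ y in sphS, ⟪m y, (‖x - y‖ ^ 3)⁻¹ • (x - y)⟫ ∂μH[2]

/-- Dipole-induced magnetization with susceptibility `Q` and dipole direction `d`. -/
def mQd (Q : E3 → ℝ) (d : E3) (x : E3) : E3 := Q x • ((3 * ⟪x, d⟫) • x - d)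

/-- Cross product on `ℝ³`. -/
def cross3 (a b : E3) : E3 :=
  (EuclideanSpace.equiv (Fin 3) ℝ).symm
    ![a 1 * b 2 - a 2 * b 1, a 2 * b 0 - a 0 * b 2, a 0 * b 1 - a 1 * b 0]

/-! The two magnetizations differ by `P(y·u) (d × d̄) × y`, a multiple of the field
`P(y·u) u × y` circulating around the axis `u`. Its potential at `x₀` vanishes: the reflection
in a plane containing `u` and `x₀` preserves the sphere, its Hausdorff measure, `y·u` and
`|x₀ - y|`, but reverses the sign of `(x₀ - y)·(u × y) = y·(x₀ × u)`, so the integrand is odd.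
Off the sphere all integrands are continuous, and the sphere has finite `μH[2]`-measure as a
Lipschitz image of a square, so the potentials may be subtracted under the integral. -/

lemma inner_eq_sum_three (x y : E3) : ⟪x, y⟫ = x 0 * y 0 + x 1 * y 1 + x 2 * y 2 := by
  simp [PiLp.inner_apply, Fin.sum_univ_three, mul_comm]

lemma inner_cross3_sub (u x y : E3) : ⟪cross3 u y, x - y⟫ = ⟪y, cross3 x u⟫ := by
  simp only [inner_eq_sum_three]; simp [cross3]; ring

lemma inner_cross3_self_left (x u : E3) : ⟪x, cross3 x u⟫ = 0 := by
  simp only [inner_eq_sum_three]; simp [cross3]; ring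

lemma inner_cross3_self_right (x u : E3) : ⟪u, cross3 x u⟫ = 0 := by
  simp only [inner_eq_sum_three]; simp [cross3]; ring

lemma cross3_smul_left (r : ℝ) (a b : E3) : cross3 (r • a) b = r • cross3 a b := by
  ext i; fin_cases i <;> simp [cross3] <;> ring

lemma cross3_cross3_left (a b y : E3) :
    cross3 (cross3 a b) y = ⟪y, a⟫ • b - ⟪y, b⟫ • a := by
  ext i; fin_cases i <;> simp [cross3, inner_eq_sum_three] <;> ring

theorem MeasureTheory.MeasurePreserving.setIntegral_eq_zero_of_comp_eq_neg
    {α E : Type*} [MeasurableSpace α] [NormedAddCommGroup E] [NormedSpace ℝ E]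
    {μ : Measure α} {f : α → α} (hf : MeasurePreserving f μ μ) (he : MeasurableEmbedding f)
    {s : Set α} (hs : f ⁻¹' s = s) {g : α → E} (hg : ∀ x, g (f x) = -g x) :
    ∫ x in s, g x ∂μ = 0 := by
  have : IsAddTorsionFree E := .of_isTorsionFree ℝ E
  rw [← self_eq_neg, ← integral_neg, ← hf.setIntegral_preimage_emb he g s, hs]
  simp_rw [hg]

lemma LinearIsometryEquiv.preimage_sphS (e : E3 ≃ₗᵢ[ℝ] E3) : e ⁻¹' sphS = sphS := by
  simp [sphS, e.preimage_sphere]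

lemma V_smul_cross3_eq_zero (P : ℝ → ℝ) (u x : E3) :
    V (fun y => P ⟪y, u⟫ • cross3 u y) x = 0 := by
  set w := cross3 x u
  let σ := (ℝ ∙ w)ᗮ.reflection
  have hσu : σ u = u := Submodule.reflection_mem_subspace_eq_self
    (Submodule.mem_orthogonal_singleton_iff_inner_left.mpr (inner_cross3_self_right x u))
  have hσx : σ x = x := Submodule.reflection_mem_subspace_eq_self
    (Submodule.mem_orthogonal_singleton_iff_inner_left.mpr (inner_cross3_self_left x u))
  have hσw : σ w = -w := Submodule.reflection_orthogonalComplement_singleton_eq_neg w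
  have hintegrand : ∀ y, ⟪P ⟪y, u⟫ • cross3 u y, (‖x - y‖ ^ 3)⁻¹ • (x - y)⟫
      = P ⟪y, u⟫ * (‖x - y‖ ^ 3)⁻¹ * ⟪y, w⟫ := fun y => by
    rw [real_inner_smul_left, real_inner_smul_right, inner_cross3_sub, mul_assoc]
  have hodd : ∀ y, P ⟪σ y, u⟫ * (‖x - σ y‖ ^ 3)⁻¹ * ⟪σ y, w⟫
      = -(P ⟪y, u⟫ * (‖x - y‖ ^ 3)⁻¹ * ⟪y, w⟫) := fun y => by
    rw [← hσu, σ.inner_map_map, ← hσx, ← map_sub, σ.norm_map, hσx, hσu]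
    conv_lhs => rw [← neg_neg w, ← hσw, inner_neg_right, σ.inner_map_map]
    ring
  simp_rw [V, hintegrand]
  rw [(σ.toIsometryEquiv.measurePreserving_hausdorffMeasure 2).setIntegral_eq_zero_of_comp_eq_neg
    σ.toHomeomorph.measurableEmbedding σ.preimage_sphS hodd, mul_zero]

def sphericalCoords (p : Fin 2 → ℝ) : E3 :=
  !₂[Real.cos (p 0) * Real.cos (p 1), Real.cos (p 0) * Real.sin (p 1), Real.sin (p 0)]

lemma contDiff_sphericalCoords : ContDiff ℝ 1 sphericalCoords := by
  refine contDiff_piLp' 2 fun i => ?_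
  fin_cases i <;> simp only [sphericalCoords] <;> simp <;> fun_prop

lemma sphS_subset_image_sphericalCoords :
    sphS ⊆ sphericalCoords '' Metric.closedBall 0 Real.pi := by
  intro y hy
  have hy1 : y 0 ^ 2 + y 1 ^ 2 + y 2 ^ 2 = 1 := by
    have : ‖y‖ ^ 2 = 1 := by simp [sphS] at hy; simp [hy]
    simpa [EuclideanSpace.norm_sq_eq, Fin.sum_univ_three] using this
  set w : ℂ := ⟨y 0, y 1⟩
  set v : ℂ := ⟨‖w‖, y 2⟩
  have hv : ‖v‖ = 1 := by
    refine (pow_eq_one_iff_of_nonneg (norm_nonneg v) two_ne_zero).mp ?_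
    rw [Complex.sq_norm, Complex.normSq_mk, ← sq, Complex.sq_norm, Complex.normSq_mk]
    linear_combination hy1
  refine ⟨![v.arg, w.arg], ?_, ?_⟩
  · rw [mem_closedBall_zero_iff, pi_norm_le_iff_of_nonneg Real.pi_pos.le]
    intro i; fin_cases i <;> simpa using Complex.abs_arg_le_pi _
  · have hc : Real.cos v.arg = ‖w‖ := by simpa [hv] using Complex.norm_mul_cos_arg v
    have hs : Real.sin v.arg = y 2 := by simpa [hv] using Complex.norm_mul_sin_arg v
    ext i; fin_cases i
    · simp [sphericalCoords, hc, Complex.norm_mul_cos_arg, w]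
    · simp [sphericalCoords, hc, Complex.norm_mul_sin_arg, w]
    · simp [sphericalCoords, hs]

lemma hausdorffMeasure_sphS_lt_top : μH[2] sphS < ⊤ := by
  obtain ⟨K, hK⟩ := contDiff_sphericalCoords.contDiffOn.exists_lipschitzOnWith one_ne_zero
    (convex_closedBall 0 Real.pi) (isCompact_closedBall 0 Real.pi)
  have hball : (μH[2] : Measure (Fin 2 → ℝ)) (Metric.closedBall 0 Real.pi) < ⊤ := by
    have hvol : (μH[2] : Measure (Fin 2 → ℝ)) = volume := by
      simpa using hausdorffMeasure_pi_real (ι := Fin 2)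
    exact hvol ▸ (isCompact_closedBall 0 Real.pi).measure_lt_top
  calc μH[2] sphS ≤ μH[2] (sphericalCoords '' Metric.closedBall 0 Real.pi) :=
        measure_mono sphS_subset_image_sphericalCoords
    _ ≤ K ^ (2 : ℝ) * μH[2] (Metric.closedBall 0 Real.pi) :=
        hK.hausdorffMeasure_image_le zero_le_two
    _ < ⊤ := ENNReal.mul_lt_top (by simp) hball

lemma integrableOn_sphS_of_continuousOn {F : Type*} [NormedAddCommGroup F] {f : E3 → F}
    (hf : ContinuousOn f sphS) :
    IntegrableOn f sphS μH[2] :=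
  hf.integrableOn_of_subset_isCompact (isCompact_sphere 0 1) Metric.isClosed_sphere.measurableSet
    subset_rfl hausdorffMeasure_sphS_lt_top.ne

lemma V_sub {m₁ m₂ : E3 → E3} (h₁ : ContinuousOn m₁ sphS) (h₂ : ContinuousOn m₂ sphS)
    {x : E3} (hx : ‖x‖ ≠ 1) : V (m₁ - m₂) x = V m₁ x - V m₂ x := by
  have hne : ∀ y ∈ sphS, ‖x - y‖ ^ 3 ≠ 0 := fun y hy => by
    have : x ≠ y := by rintro rfl; simp [sphS] at hy; exact hx hy
    simpa [sub_eq_zero] using this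
  have hkernel : ContinuousOn (fun y => (‖x - y‖ ^ 3)⁻¹ • (x - y)) sphS := by
    fun_prop (disch := exact hne)
  simp only [V, Pi.sub_apply, inner_sub_left]
  rw [integral_sub (integrableOn_sphS_of_continuousOn (h₁.inner hkernel))
    (integrableOn_sphS_of_continuousOn (h₂.inner hkernel)), mul_sub]

lemma continuousOn_mQd {Q : E3 → ℝ} (hQ : ContinuousOn Q sphS) (d : E3) :
    ContinuousOn (mQd Q d) sphS :=
  hQ.smul (by fun_prop)

lemma mQd_sub_mQd (R : E3 → ℝ) (d e y : E3) :
    mQd (fun x => R x * ⟪x, e⟫) d y - mQd (fun x => R x * ⟪x, d⟫) e y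
      = R y • cross3 (cross3 d e) y := by
  rw [mQd, mQd, cross3_cross3_left]
  module

lemma continuousOn_sphS_comp_inner {P : ℝ → ℝ} (hP : ContinuousOn P (Set.Icc (-1) 1))
    {u : E3} (hu : ‖u‖ ≤ 1) : ContinuousOn (fun y => P ⟪y, u⟫) sphS := by
  refine hP.comp (by fun_prop) fun y hy => abs_le.mp ?_
  calc |⟪y, u⟫| ≤ ‖y‖ * ‖u‖ := abs_real_inner_le_norm y u
    _ ≤ 1 := by simp [sphS] at hy; simpa [hy] using hu

theorem dipole_direction_nonuniqueness_general
    (d dbar : E3)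
    (u : E3) (hu : u = ‖cross3 d dbar‖⁻¹ • cross3 d dbar)
    (P : ℝ → ℝ) (hP : ContDiffOn ℝ 1 P (Set.Icc (-1 : ℝ) 1))
    (Q Qbar : E3 → ℝ)
    (hQ : ∀ x : E3, Q x = P ⟪x, u⟫ * ⟪x, dbar⟫)
    (hQbar : ∀ x : E3, Qbar x = P ⟪x, u⟫ * ⟪x, d⟫) :
    ∀ x₀ : E3, ‖x₀‖ ≠ 1 → V (mQd Q d) x₀ = V (mQd Qbar dbar) x₀ := by
  intro x₀ hx
  obtain ⟨r, hr⟩ : ∃ r : ℝ, cross3 d dbar = r • u := by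
    refine ⟨‖cross3 d dbar‖, ?_⟩
    rcases eq_or_ne (cross3 d dbar) 0 with h | h
    · simp [h]
    · rw [hu, smul_inv_smul₀ (norm_ne_zero_iff.mpr h)]
  have hPu : ContinuousOn (fun y => P ⟪y, u⟫) sphS := continuousOn_sphS_comp_inner
    hP.continuousOn (hu ▸ mem_closedBall_zero_iff.mp (inv_norm_smul_mem_unitClosedBall _))
  have hQc : ContinuousOn Q sphS := (hPu.mul (by fun_prop)).congr fun x _ => hQ x
  have hQbarc : ContinuousOn Qbar sphS := (hPu.mul (by fun_prop)).congr fun x _ => hQbar x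
  have hdiff : mQd Q d - mQd Qbar dbar = fun y => (P ⟪y, u⟫ * r) • cross3 u y := by
    funext y
    rw [Pi.sub_apply, funext hQ, funext hQbar, mQd_sub_mQd, hr, cross3_smul_left, smul_smul]
  rw [← sub_eq_zero, ← V_sub (continuousOn_mQd hQc d) (continuousOn_mQd hQbarc dbar) hx, hdiff]
  exact V_smul_cross3_eq_zero (fun t => P t * r) u x₀

/-- **Non-uniqueness of dipole directions.** For two linearly independent directions
`d, d̄` on the sphere and any `C¹` profile `P : [-1,1] → ℝ`, the susceptibilities
`Q(x) = P(x·u)(x·d̄)` and `Q̄(x) = P(x·u)(x·d)`, with `u = (d × d̄)/|d × d̄|`, produce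
identical magnetic potentials everywhere off the unit sphere. -/
theorem dipole_direction_nonuniqueness
    (d dbar : E3) (hd : d ∈ sphS) (hdbar : dbar ∈ sphS)
    (hind : LinearIndependent ℝ ![d, dbar])
    (u : E3) (hu : u = ‖cross3 d dbar‖⁻¹ • cross3 d dbar)
    (P : ℝ → ℝ) (hP : ContDiffOn ℝ 1 P (Set.Icc (-1 : ℝ) 1))
    (Q Qbar : E3 → ℝ)
    (hQ : ∀ x : E3, Q x = P ⟪x, u⟫ * ⟪x, dbar⟫)
    (hQbar : ∀ x : E3, Qbar x = P ⟪x, u⟫ * ⟪x, d⟫) :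
    ∀ x₀ : E3, ‖x₀‖ ≠ 1 → V (mQd Q d) x₀ = V (mQd Qbar dbar) x₀ :=
  dipole_direction_nonuniqueness_general d dbar u hu P hP Q Qbar hQ hQbar
end
end

section
/- Let m : S → ℝ³ be continuous with y·m(y) = 0 for all y ∈ S (m is tangential) and suppose ∫_S m(y)·∇φ(y) dσ(y) = 0 for every smooth φ : ℝ³ → ℝ (m is weakly surface divergence-free). Then V[m](x) = 0 for every x ∈ ℝ³ with |x| ≠ 1, i.e., m is silent from both inside and outside. -/
open MeasureTheory
open scoped RealInnerProductSpace

noncomputable section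

/-- Spherical coordinates parametrization of the unit sphere. -/
def sphF (p : ℝ × ℝ) : E3 :=
  (WithLp.equiv 2 (Fin 3 → ℝ)).symm
    ![Real.sin p.1 * Real.cos p.2, Real.sin p.1 * Real.sin p.2, Real.cos p.1]

lemma sphF_apply (p : ℝ × ℝ) :
    ∀ i, sphF p i = ![Real.sin p.1 * Real.cos p.2, Real.sin p.1 * Real.sin p.2,
      Real.cos p.1] i := by
  intro i; rfl

lemma sin_lip : LipschitzWith 1 Real.sin := by
  apply lipschitzWith_of_nnnorm_deriv_le Real.differentiable_sin
  intro t
  rw [Real.deriv_sin, ← NNReal.coe_le_coe, coe_nnnorm, Real.norm_eq_abs, NNReal.coe_one]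
  exact Real.abs_cos_le_one t

lemma cos_lip : LipschitzWith 1 Real.cos := by
  apply lipschitzWith_of_nnnorm_deriv_le Real.differentiable_cos
  intro t
  rw [Real.deriv_cos', ← NNReal.coe_le_coe, coe_nnnorm, Real.norm_eq_abs, NNReal.coe_one,
    abs_neg]
  exact Real.abs_sin_le_one t

lemma abs_sin_sub_sin (a b : ℝ) : |Real.sin a - Real.sin b| ≤ |a - b| := by
  have := sin_lip.dist_le_mul a b
  simpa [Real.dist_eq] using this

lemma abs_cos_sub_cos (a b : ℝ) : |Real.cos a - Real.cos b| ≤ |a - b| := by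
  have := cos_lip.dist_le_mul a b
  simpa [Real.dist_eq] using this

lemma sphF_lipschitz : LipschitzWith 4 sphF := by
  apply LipschitzWith.of_dist_le_mul
  intro p q
  have h1 : |p.1 - q.1| ≤ dist p q := by
    rw [Prod.dist_eq, ← Real.dist_eq]; exact le_max_left _ _
  have h2 : |p.2 - q.2| ≤ dist p q := by
    rw [Prod.dist_eq, ← Real.dist_eq]; exact le_max_right _ _
  have hd : (0 : ℝ) ≤ dist p q := dist_nonneg
  -- bound each coordinate difference by `2 * dist p q`
  have key : ∀ i, |sphF p i - sphF q i| ≤ 2 * dist p q := by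
    intro i
    fin_cases i
    · show |Real.sin p.1 * Real.cos p.2 - Real.sin q.1 * Real.cos q.2| ≤ 2 * dist p q
      have : Real.sin p.1 * Real.cos p.2 - Real.sin q.1 * Real.cos q.2
          = (Real.sin p.1 - Real.sin q.1) * Real.cos p.2
            + Real.sin q.1 * (Real.cos p.2 - Real.cos q.2) := by ring
      rw [this]
      calc |(Real.sin p.1 - Real.sin q.1) * Real.cos p.2
            + Real.sin q.1 * (Real.cos p.2 - Real.cos q.2)|
          ≤ |(Real.sin p.1 - Real.sin q.1) * Real.cos p.2|
            + |Real.sin q.1 * (Real.cos p.2 - Real.cos q.2)| := abs_add_le _ _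
        _ ≤ |p.1 - q.1| + |p.2 - q.2| := by
            rw [abs_mul, abs_mul]
            gcongr
            · calc |Real.sin p.1 - Real.sin q.1| * |Real.cos p.2|
                  ≤ |p.1 - q.1| * 1 := by
                    apply mul_le_mul (abs_sin_sub_sin _ _) (Real.abs_cos_le_one _)
                      (abs_nonneg _) (abs_nonneg _)
                _ = |p.1 - q.1| := mul_one _
            · calc |Real.sin q.1| * |Real.cos p.2 - Real.cos q.2|
                  ≤ 1 * |p.2 - q.2| := by
                    apply mul_le_mul (Real.abs_sin_le_one _) (abs_cos_sub_cos _ _)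
                      (abs_nonneg _) zero_le_one
                _ = |p.2 - q.2| := one_mul _
        _ ≤ 2 * dist p q := by linarith
    · show |Real.sin p.1 * Real.sin p.2 - Real.sin q.1 * Real.sin q.2| ≤ 2 * dist p q
      have : Real.sin p.1 * Real.sin p.2 - Real.sin q.1 * Real.sin q.2
          = (Real.sin p.1 - Real.sin q.1) * Real.sin p.2
            + Real.sin q.1 * (Real.sin p.2 - Real.sin q.2) := by ring
      rw [this]
      calc |(Real.sin p.1 - Real.sin q.1) * Real.sin p.2
            + Real.sin q.1 * (Real.sin p.2 - Real.sin q.2)|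
          ≤ |(Real.sin p.1 - Real.sin q.1) * Real.sin p.2|
            + |Real.sin q.1 * (Real.sin p.2 - Real.sin q.2)| := abs_add_le _ _
        _ ≤ |p.1 - q.1| + |p.2 - q.2| := by
            rw [abs_mul, abs_mul]
            gcongr
            · calc |Real.sin p.1 - Real.sin q.1| * |Real.sin p.2|
                  ≤ |p.1 - q.1| * 1 := by
                    apply mul_le_mul (abs_sin_sub_sin _ _) (Real.abs_sin_le_one _)
                      (abs_nonneg _) (abs_nonneg _)
                _ = |p.1 - q.1| := mul_one _
            · calc |Real.sin q.1| * |Real.sin p.2 - Real.sin q.2|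
                  ≤ 1 * |p.2 - q.2| := by
                    apply mul_le_mul (Real.abs_sin_le_one _) (abs_sin_sub_sin _ _)
                      (abs_nonneg _) zero_le_one
                _ = |p.2 - q.2| := one_mul _
        _ ≤ 2 * dist p q := by linarith
    · show |Real.cos p.1 - Real.cos q.1| ≤ 2 * dist p q
      calc |Real.cos p.1 - Real.cos q.1| ≤ |p.1 - q.1| := abs_cos_sub_cos _ _
        _ ≤ 2 * dist p q := by linarith
  rw [dist_eq_norm, EuclideanSpace.norm_eq]
  have hsum : ∑ i, ‖(sphF p - sphF q) i‖ ^ 2 ≤ (4 * dist p q) ^ 2 := by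
    have hterm : ∀ i, ‖(sphF p - sphF q) i‖ ^ 2 ≤ (2 * dist p q) ^ 2 := by
      intro i
      have : (sphF p - sphF q) i = sphF p i - sphF q i := rfl
      rw [this, Real.norm_eq_abs, sq_abs]
      have h := key i
      nlinarith [abs_nonneg (sphF p i - sphF q i), abs_le.mp h,
        neg_abs_le (sphF p i - sphF q i), le_abs_self (sphF p i - sphF q i)]
    calc ∑ i, ‖(sphF p - sphF q) i‖ ^ 2 ≤ ∑ _i : Fin 3, (2 * dist p q) ^ 2 :=
          Finset.sum_le_sum fun i _ => hterm i
      _ = 3 * (2 * dist p q) ^ 2 := by simp [Finset.sum_const]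
      _ ≤ (4 * dist p q) ^ 2 := by nlinarith
  calc Real.sqrt (∑ i, ‖(sphF p - sphF q) i‖ ^ 2) ≤ Real.sqrt ((4 * dist p q) ^ 2) :=
        Real.sqrt_le_sqrt hsum
    _ = 4 * dist p q := Real.sqrt_sq (by positivity)
    _ = (4 : NNReal) * dist p q := by norm_num

/-- The sphere is contained in the image of a bounded rectangle. -/
lemma sphS_subset_image :
    sphS ⊆ sphF '' (Set.Icc 0 Real.pi ×ˢ Set.Icc (-Real.pi) Real.pi) := by
  intro y hy
  have hy1 : ‖y‖ = 1 := by simpa [sphS, dist_eq_norm] using hy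
  have hsum : ∑ i, y i ^ 2 = 1 := by
    have := EuclideanSpace.norm_eq y
    rw [hy1] at this
    have h2 : Real.sqrt (∑ i, ‖y i‖ ^ 2) = 1 := this.symm
    have := Real.sqrt_eq_one.mp h2
    simpa [Real.norm_eq_abs, sq_abs] using this
  have hsum3 : y 0 ^ 2 + y 1 ^ 2 + y 2 ^ 2 = 1 := by
    rw [← hsum, Fin.sum_univ_three]
  have hy2sq : y 2 ^ 2 ≤ 1 := by nlinarith [sq_nonneg (y 0), sq_nonneg (y 1)]
  have hy2a : -1 ≤ y 2 := by nlinarith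
  have hy2b : y 2 ≤ 1 := by nlinarith
  set θ := Real.arccos (y 2) with hθ
  have hcosθ : Real.cos θ = y 2 := Real.cos_arccos hy2a hy2b
  have hsinθ : Real.sin θ = Real.sqrt (y 0 ^ 2 + y 1 ^ 2) := by
    rw [hθ, Real.sin_arccos]
    congr 1
    nlinarith
  have hy01 : y 0 ^ 2 + y 1 ^ 2 = 1 - y 2 ^ 2 := by nlinarith
  set z : ℂ := ⟨y 0, y 1⟩ with hz
  set b : ℝ := Complex.arg z with hb
  have habs : ‖z‖ = Real.sin θ := by
    rw [hsinθ, Complex.norm_def, Complex.normSq_mk]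
    congr 1
    ring
  have hbmem : b ∈ Set.Icc (-Real.pi) Real.pi :=
    ⟨(Complex.neg_pi_lt_arg z).le, Complex.arg_le_pi z⟩
  refine ⟨(θ, b), ⟨⟨Real.arccos_nonneg _, Real.arccos_le_pi _⟩, hbmem⟩, ?_⟩
  have hc0 : Real.sin θ * Real.cos b = y 0 := by
    by_cases hz0 : z = 0
    · have h0 : y 0 = 0 := congrArg Complex.re hz0
      have hs0 : Real.sin θ = 0 := by rw [← habs, hz0]; simp
      rw [hs0, h0, zero_mul]
    · rw [Complex.cos_arg hz0, ← habs]
      have : ‖z‖ ≠ 0 := by simpa using hz0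
      field_simp
      rfl
  have hc1 : Real.sin θ * Real.sin b = y 1 := by
    by_cases hz0 : z = 0
    · have h1 : y 1 = 0 := congrArg Complex.im hz0
      have hs0 : Real.sin θ = 0 := by rw [← habs, hz0]; simp
      rw [hs0, h1, zero_mul]
    · rw [Complex.sin_arg, ← habs]
      have : ‖z‖ ≠ 0 := by simpa using hz0
      field_simp
      rfl
  ext i
  rw [sphF_apply (θ, b) i]
  fin_cases i
  · exact hc0
  · exact hc1
  · exact hcosθ

/-- The 2-dimensional Hausdorff measure of the unit sphere is finite. -/
lemma sphS_finite : μH[2] sphS ≠ ⊤ := by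
  have h1 : μH[2] sphS ≤ μH[2] (sphF '' (Set.Icc 0 Real.pi ×ˢ Set.Icc (-Real.pi) Real.pi)) :=
    measure_mono sphS_subset_image
  have h2 := sphF_lipschitz.hausdorffMeasure_image_le (by norm_num : (0:ℝ) ≤ 2)
    (Set.Icc 0 Real.pi ×ˢ Set.Icc (-Real.pi) Real.pi)
  have h3 : μH[2] (Set.Icc 0 Real.pi ×ˢ Set.Icc (-Real.pi) Real.pi) < ⊤ := by
    rw [show ((2:ℝ) = (2:ℕ)) from by norm_num]
    rw [show (μH[(2:ℕ)] : Measure (ℝ × ℝ)) = volume from by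
      simpa using hausdorffMeasure_prod_real]
    exact (isCompact_Icc.prod isCompact_Icc).measure_lt_top
  apply ne_top_of_le_ne_top _ (h1.trans h2)
  apply ENNReal.mul_ne_top _ h3.ne
  simp [ENNReal.rpow_natCast]

lemma sphS_measurable : MeasurableSet sphS := Metric.isClosed_sphere.measurableSet

lemma sphS_compact : IsCompact sphS := isCompact_sphere 0 1

instance : IsFiniteMeasure (μH[2].restrict sphS) := by
  constructor
  rw [Measure.restrict_apply_univ]
  exact lt_top_iff_ne_top.mpr sphS_finite

/-- Continuous functions on the sphere are integrable. -/
lemma integrableOn_sphS (f : E3 → ℝ) (hf : ContinuousOn f sphS) :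
    IntegrableOn f sphS μH[2] := by
  obtain ⟨C, hC⟩ := sphS_compact.exists_bound_of_continuousOn hf
  constructor
  · exact hf.aestronglyMeasurable sphS_measurable
  · apply HasFiniteIntegral.of_bounded (C := C)
    filter_upwards [ae_restrict_mem sphS_measurable] with y hy using hC y hy

/-- Gradient of a scalar function composed with a linear form given by an inner product. -/
lemma hasGradientAt_comp_inner (x : E3) (u : ℝ → ℝ) (u' : ℝ) (y : E3)
    (hu : HasDerivAt u u' ⟪x, y⟫) :
    HasGradientAt (fun z => u ⟪x, z⟫) (u' • x) y := by
  have hlin : HasFDerivAt (fun z : E3 => (⟪x, z⟫ : ℝ)) (innerSL ℝ x) y :=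
    (innerSL ℝ x).hasFDerivAt
  have hcomp := hu.comp_hasFDerivAt y hlin
  rw [hasGradientAt_iff_hasFDerivAt]
  have : (InnerProductSpace.toDual ℝ E3) (u' • x) = u' • (innerSL ℝ x : E3 →L[ℝ] ℝ) := by
    apply ContinuousLinearMap.ext
    intro v
    simp [InnerProductSpace.toDual_apply_apply, real_inner_smul_left]
  rw [this]
  exact hcomp

/-- **Tangential weakly divergence-free fields are silent.** A continuous tangential
magnetization on the unit sphere whose weak surface divergence vanishes produces no
magnetic potential off the sphere. -/
theorem tangential_divfree_silent
    (m : E3 → E3) (hm : ContinuousOn m sphS)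
    (htang : ∀ y ∈ sphS, ⟪y, m y⟫ = 0)
    (hdivfree : ∀ φ : E3 → ℝ, ContDiff ℝ (⊤ : ℕ∞) φ →
      (∫ y in sphS, ⟪m y, gradient φ y⟫ ∂μH[2]) = 0) :
    ∀ x : E3, ‖x‖ ≠ 1 → V m x = 0 := by
  intro x hx
  set R : ℝ := ‖x‖ with hR
  have hR0 : 0 ≤ R := norm_nonneg x
  set c : ℝ := 1 + R ^ 2 with hc
  have h1R : (1 - R) ≠ 0 := sub_ne_zero.mpr (Ne.symm hx)
  have hpos : ∀ s ∈ Set.Icc (-R) R, 0 < c - 2 * s := by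
    intro s hs
    have h2 : (0:ℝ) < (1 - R) ^ 2 := by positivity
    have h3 : s ≤ R := hs.2
    nlinarith
  -- the scalar profile of the kernel
  set h : ℝ → ℝ := fun s => (Real.sqrt (c - 2 * s))⁻¹ ^ 3 with hh
  have hcont : ContinuousOn h (Set.Icc (-R) R) := by
    apply ContinuousOn.pow
    apply ContinuousOn.inv₀
    · exact ((continuous_const.sub (continuous_const.mul continuous_id)).sqrt).continuousOn
    · intro s hs
      exact (Real.sqrt_pos.mpr (hpos s hs)).ne'
  have hymem : ∀ y ∈ sphS, ‖y‖ = 1 := by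
    intro y hy
    simpa [sphS, dist_eq_norm] using hy
  have htIcc : ∀ y ∈ sphS, ⟪x, y⟫ ∈ Set.Icc (-R) R := by
    intro y hy
    have := abs_real_inner_le_norm x y
    rw [hymem y hy, mul_one] at this
    exact abs_le.mp this
  have hnorm_eq : ∀ y ∈ sphS, ‖x - y‖ = Real.sqrt (c - 2 * ⟪x, y⟫) := by
    intro y hy
    have hsq : ‖x - y‖ ^ 2 = c - 2 * ⟪x, y⟫ := by
      rw [norm_sub_sq_real, hymem y hy]
      ring
    rw [← hsq, Real.sqrt_sq (norm_nonneg _)]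
  have hxysub : ∀ y ∈ sphS, x - y ≠ 0 := by
    intro y hy hcontra
    rw [sub_eq_zero] at hcontra
    exact hx (by rw [hR, hcontra]; exact hymem y hy)
  -- the kernel integrand in scalar form
  have hker : ∀ y ∈ sphS, ⟪m y, (‖x - y‖ ^ 3)⁻¹ • (x - y)⟫ = h ⟪x, y⟫ * ⟪m y, x⟫ := by
    intro y hy
    rw [real_inner_smul_right, inner_sub_right]
    have hmy : ⟪m y, y⟫ = 0 := by
      rw [real_inner_comm]; exact htang y hy
    rw [hmy, sub_zero]
    congr 1
    rw [hnorm_eq y hy, hh]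
    simp [inv_pow]
  -- integrability of the kernel integrand
  have hfm : IntegrableOn (fun y => ⟪m y, (‖x - y‖ ^ 3)⁻¹ • (x - y)⟫) sphS μH[2] := by
    apply integrableOn_sphS
    apply ContinuousOn.inner hm
    apply ContinuousOn.smul (f := fun t => (‖x - t‖ ^ 3)⁻¹) (g := fun t => x - t)
    · apply ContinuousOn.inv₀
      · exact (((continuous_const.sub continuous_id).norm).pow 3).continuousOn
      · intro y hy
        exact pow_ne_zero 3 (norm_ne_zero_iff.mpr (hxysub y hy))
    · exact (continuous_const.sub continuous_id).continuousOn
  -- bound on m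
  obtain ⟨M, hM⟩ := sphS_compact.exists_bound_of_continuousOn hm
  have hsph_ne : sphS.Nonempty := NormedSpace.sphere_nonempty.mpr zero_le_one
  have hM0 : 0 ≤ M := le_trans (norm_nonneg _) (hM hsph_ne.some hsph_ne.some_mem)
  set A : ℝ := (μH[2] sphS).toReal * (M * R) with hA_def
  have hA0 : 0 ≤ A := by
    apply mul_nonneg ENNReal.toReal_nonneg (mul_nonneg hM0 hR0)
  set I : ℝ := ∫ y in sphS, ⟪m y, (‖x - y‖ ^ 3)⁻¹ • (x - y)⟫ ∂μH[2] with hI_def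
  have key : ∀ ε : ℝ, 0 < ε → |I| ≤ ε * A := by
    intro ε hε
    obtain ⟨p, hp⟩ := exists_polynomial_near_of_continuousOn (-R) R h hcont ε hε
    set n : ℕ := p.natDegree + 1 with hn
    set u : ℝ → ℝ := fun t => ∑ k ∈ Finset.range n, p.coeff k / ((k : ℝ) + 1) * t ^ (k + 1)
      with hu_def
    set φ : E3 → ℝ := fun z => u ⟪x, z⟫ with hφ_def
    have hφ : ContDiff ℝ (⊤ : ℕ∞) φ := by
      apply ContDiff.sum
      intro k _
      exact contDiff_const.mul (((innerSL ℝ x).contDiff).pow (k + 1))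
    have hu : ∀ t : ℝ, HasDerivAt u (Polynomial.eval t p) t := by
      intro t
      have h1 : HasDerivAt u (∑ k ∈ Finset.range n, p.coeff k * t ^ k) t := by
        apply HasDerivAt.fun_sum
        intro k _
        have h2 := (hasDerivAt_pow (k + 1) t).const_mul (p.coeff k / ((k : ℝ) + 1))
        have hk1 : ((k : ℝ) + 1) ≠ 0 := by positivity
        refine h2.congr_deriv (Eq.symm ?_)
        rw [Nat.add_sub_cancel]
        push_cast
        field_simp
      rw [Polynomial.eval_eq_sum_range]
      exact h1
    have hgrad : ∀ y : E3, gradient φ y = Polynomial.eval ⟪x, y⟫ p • x := by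
      intro y
      exact (hasGradientAt_comp_inner x u _ y (hu _)).gradient
    have hzero : (∫ y in sphS, Polynomial.eval ⟪x, y⟫ p * ⟪m y, x⟫ ∂μH[2]) = 0 := by
      have hd := hdivfree φ hφ
      rw [← hd]
      congr 1
      funext y
      rw [hgrad y, real_inner_smul_right]
    have hgm : IntegrableOn (fun y => Polynomial.eval ⟪x, y⟫ p * ⟪m y, x⟫) sphS μH[2] := by
      apply integrableOn_sphS
      apply ContinuousOn.mul
      · exact (p.continuous.comp (continuous_const.inner continuous_id)).continuousOn
      · exact ContinuousOn.inner hm continuousOn_const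
    -- pointwise estimate on the sphere
    have hpt : ∀ y ∈ sphS,
        ‖⟪m y, (‖x - y‖ ^ 3)⁻¹ • (x - y)⟫ - Polynomial.eval ⟪x, y⟫ p * ⟪m y, x⟫‖
          ≤ ε * (M * R) := by
      intro y hy
      rw [hker y hy, Real.norm_eq_abs]
      have : h ⟪x, y⟫ * ⟪m y, x⟫ - Polynomial.eval ⟪x, y⟫ p * ⟪m y, x⟫
          = (h ⟪x, y⟫ - Polynomial.eval ⟪x, y⟫ p) * ⟪m y, x⟫ := by ring
      rw [this, abs_mul]
      have h1 : |h ⟪x, y⟫ - Polynomial.eval ⟪x, y⟫ p| ≤ ε := by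
        rw [abs_sub_comm]
        exact (hp _ (htIcc y hy)).le
      have h2 : |⟪m y, x⟫| ≤ M * R := by
        calc |⟪m y, x⟫| ≤ ‖m y‖ * ‖x‖ := abs_real_inner_le_norm _ _
          _ ≤ M * R := by
              apply mul_le_mul (hM y hy) le_rfl hR0 hM0
      exact mul_le_mul h1 h2 (abs_nonneg _) hε.le
    -- integral estimate
    have e1 : (∫ y in sphS,
        (⟪m y, (‖x - y‖ ^ 3)⁻¹ • (x - y)⟫ - Polynomial.eval ⟪x, y⟫ p * ⟪m y, x⟫) ∂μH[2]) = I := by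
      rw [integral_sub hfm hgm, hzero, sub_zero]
    calc |I| = ‖∫ y in sphS,
          (⟪m y, (‖x - y‖ ^ 3)⁻¹ • (x - y)⟫ - Polynomial.eval ⟪x, y⟫ p * ⟪m y, x⟫) ∂μH[2]‖ := by
            rw [e1, Real.norm_eq_abs]
      _ ≤ ∫ y in sphS,
          ‖⟪m y, (‖x - y‖ ^ 3)⁻¹ • (x - y)⟫ - Polynomial.eval ⟪x, y⟫ p * ⟪m y, x⟫‖ ∂μH[2] :=
            norm_integral_le_integral_norm _
      _ ≤ ∫ _y in sphS, ε * (M * R) ∂μH[2] := by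
            apply setIntegral_mono_on ((hfm.sub hgm).norm)
              (integrableOn_const sphS_finite)
              sphS_measurable
            exact hpt
      _ = (μH[2] sphS).toReal • (ε * (M * R)) := setIntegral_const _
      _ = ε * A := by rw [smul_eq_mul, hA_def]; ring
  -- conclude I = 0
  have hI : I = 0 := by
    by_contra h0
    have habs : 0 < |I| := abs_pos.mpr h0
    have h2 := key (|I| / (2 * (A + 1))) (by positivity)
    have h3 : |I| / (2 * (A + 1)) * A < |I| := by
      rw [div_mul_eq_mul_div, div_lt_iff₀ (by positivity)]
      nlinarith
    linarith
  simp only [V, ← hI_def, hI, mul_zero]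
end
end
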